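/- arXiv:2510.16351 — 3 statements merged into one kernel-verified Lean document; each statement's English description precedes it below -/
import Mathlib

section
/- The minimum over all bijections σ : A → B of the total weight Σ_{a∈A} d(a, σ(a)) equals n − μ(G)/2. In particular, every bijection σ : A → B satisfies Σ_{a∈A} d(a, σ(a)) ≥ n − μ(G)/2, and there exists a bijection attaining this value. -/
/-- A finite matching of a simple graph, given as a finite set of edges of `G`
that are pairwise vertex-disjoint. -/
def IsGMatching {V : Type*} (G : SimpleGraph V) (M : Finset (Sym2 V)) : Prop :=
  (∀ e ∈ M, e ∈ G.edgeSet) ∧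
    ∀ e ∈ M, ∀ f ∈ M, e ≠ f → ∀ v : V, v ∈ e → v ∉ f

/-- The maximum size of a matching of `G`. -/
noncomputable def matchNum {V : Type*} (G : SimpleGraph V) : ℕ :=
  sSup {k | ∃ M : Finset (Sym2 V), IsGMatching G M ∧ M.card = k}

/-- For a bipartite graph `G` with parts `A`, `B` of size `n ≥ 1`, and
`d(a,b) = 1/2` if `ab` is an edge, `1` otherwise, the minimum over all
bijections `σ : A → B` of `∑_{a ∈ A} d(a, σ a)` equals `n - μ(G)/2`:
every bijection gives total weight at least `n - μ(G)/2`, and some bijection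
attains this value. -/
theorem min_weight_perfect_matching_eq
    {V : Type*} [Fintype V] [DecidableEq V]
    (G : SimpleGraph V) [DecidableRel G.Adj]
    (A B : Finset V) (n : ℕ) (hn : 1 ≤ n)
    (hA : A.card = n) (hB : B.card = n)
    (hdisj : Disjoint A B) (hcover : A ∪ B = Finset.univ)
    (hbip : ∀ u v : V, G.Adj u v → (u ∈ A ∧ v ∈ B) ∨ (u ∈ B ∧ v ∈ A))
    (d : V → V → ℝ)
    (hd : ∀ a ∈ A, ∀ b ∈ B, d a b = if G.Adj a b then 1 / 2 else 1) :
    IsLeast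
      {t : ℝ | ∃ σ : {x // x ∈ A} ≃ {x // x ∈ B},
        t = ∑ a : {x // x ∈ A}, d (a : V) ((σ a : V))}
      ((n : ℝ) - (matchNum G : ℝ) / 2) := by
  classical
  have hAB : ∀ x, x ∈ A → x ∈ B → False := fun x hx hx' =>
    Finset.disjoint_left.mp hdisj hx hx'
  -- the sum formula
  have hsum : ∀ σ : {x // x ∈ A} ≃ {x // x ∈ B},
      ∑ a : {x // x ∈ A}, d (a : V) ((σ a : V))
        = (n : ℝ) -
          ((Finset.univ.filter fun a : {x // x ∈ A} =>
            G.Adj (a : V) ((σ a : V))).card : ℝ) / 2 := by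
    intro σ
    have h1 : ∑ a : {x // x ∈ A}, d (a : V) ((σ a : V))
        = ∑ a : {x // x ∈ A}, (if G.Adj (a : V) ((σ a : V)) then (1:ℝ)/2 else 1) :=
      Finset.sum_congr rfl fun a _ => hd a.1 a.2 (σ a).1 (σ a).2
    rw [h1, Finset.sum_ite, Finset.sum_const, Finset.sum_const]
    have hc := Finset.card_filter_add_card_filter_not
      (s := (Finset.univ : Finset {x // x ∈ A}))
      (p := fun a : {x // x ∈ A} => G.Adj (a : V) ((σ a : V)))
    have hcardA : (Finset.univ : Finset {x // x ∈ A}).card = n := by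
      rw [Finset.card_univ, Fintype.card_coe, hA]
    rw [hcardA] at hc
    set c1 := (Finset.univ.filter fun a : {x // x ∈ A} =>
      G.Adj (a : V) ((σ a : V))).card
    set c2 := (Finset.univ.filter fun a : {x // x ∈ A} =>
      ¬ G.Adj (a : V) ((σ a : V))).card
    have : (c1 : ℝ) + (c2 : ℝ) = n := by exact_mod_cast hc
    push_cast
    simp only [nsmul_eq_mul, smul_eq_mul]
    linarith
  -- boundedness of matching sizes
  have hbdd : BddAbove {k | ∃ M : Finset (Sym2 V), IsGMatching G M ∧ M.card = k} := by
    refine ⟨Fintype.card (Sym2 V), ?_⟩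
    rintro k ⟨M, _, rfl⟩
    exact (Finset.card_le_univ M).trans_eq Finset.card_univ
  -- lower bound: adjacency count ≤ matchNum
  have hle : ∀ σ : {x // x ∈ A} ≃ {x // x ∈ B},
      ((Finset.univ.filter fun a : {x // x ∈ A} =>
        G.Adj (a : V) ((σ a : V))).card) ≤ matchNum G := by
    intro σ
    set S := Finset.univ.filter fun a : {x // x ∈ A} =>
      G.Adj (a : V) ((σ a : V)) with hS
    have hSadj : ∀ a ∈ S, G.Adj (a : V) ((σ a : V)) := by
      intro a ha; simpa [hS] using ha
    set f : {x // x ∈ A} → Sym2 V := fun a => s((a : V), ((σ a : V))) with hf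
    have hinj : Set.InjOn f S := by
      intro a ha a' ha' h
      simp only [hf, Sym2.eq, Sym2.rel_iff', Prod.mk.injEq, Prod.swap_prod_mk] at h
      rcases h with ⟨h1, _⟩ | ⟨h1, h2⟩
      · exact Subtype.ext h1
      · exact absurd h1 (fun h1 => hAB _ a.2 (h1 ▸ (σ a').2))
    have hM : IsGMatching G (S.image f) := by
      constructor
      · intro e he
        obtain ⟨a, ha, rfl⟩ := Finset.mem_image.mp he
        exact (SimpleGraph.mem_edgeSet G).mpr (hSadj a ha)
      · intro e he f' hf' hne v hve hvf
        obtain ⟨a, ha, rfl⟩ := Finset.mem_image.mp he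
        obtain ⟨a', ha', rfl⟩ := Finset.mem_image.mp hf'
        simp only [hf, Sym2.mem_iff] at hve hvf
        have haa' : a ≠ a' := fun h => hne (by rw [h])
        rcases hve with rfl | rfl <;> rcases hvf with h | h
        · exact haa' (Subtype.ext h)
        · exact hAB _ a.2 (h ▸ (σ a').2)
        · exact hAB _ a'.2 (h.symm ▸ (σ a).2)
        · exact haa' (Subtype.ext (by
            have := σ.injective (Subtype.ext h)
            exact congrArg Subtype.val this))
    have hcard : (S.image f).card = S.card := Finset.card_image_of_injOn hinj
    have : (S.image f).card ≤ matchNum G :=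
      le_csSup hbdd ⟨S.image f, hM, rfl⟩
    rwa [hcard] at this
  -- existence of a maximum matching
  have hne : {k | ∃ M : Finset (Sym2 V), IsGMatching G M ∧ M.card = k}.Nonempty := by
    refine ⟨0, ∅, ⟨?_, ?_⟩, by simp⟩ <;> simp
  obtain ⟨M, hM, hMcard⟩ : ∃ M : Finset (Sym2 V), IsGMatching G M ∧ M.card = matchNum G :=
    Nat.sSup_mem hne hbdd
  -- endpoints of edges of M
  have hend : ∀ e ∈ M, ∃ a b, a ∈ A ∧ b ∈ B ∧ G.Adj a b ∧ e = s(a, b) := by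
    intro e he
    induction e using Sym2.ind with
    | _ u v =>
      have hadj : G.Adj u v := (SimpleGraph.mem_edgeSet G).mp (hM.1 _ he)
      rcases hbip u v hadj with ⟨hu, hv⟩ | ⟨hu, hv⟩
      · exact ⟨u, v, hu, hv, hadj, rfl⟩
      · exact ⟨v, u, hv, hu, hadj.symm, Sym2.eq_swap⟩
  choose fa fb hfa hfb hadj heq using fun e : {e // e ∈ M} => hend e.1 e.2
  have hdisjedge : ∀ e f : {e // e ∈ M}, ∀ v : V, v ∈ e.1 → v ∈ f.1 → e = f := by
    intro e f v hv hv'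
    by_contra hne'
    exact hM.2 e.1 e.2 f.1 f.2 (fun h => hne' (Subtype.ext h)) v hv hv'
  have hfamem : ∀ e : {e // e ∈ M}, fa e ∈ e.1 := fun e => by
    rw [heq e]; exact Sym2.mem_mk_left _ _
  have hfbmem : ∀ e : {e // e ∈ M}, fb e ∈ e.1 := fun e => by
    rw [heq e]; exact Sym2.mem_mk_right _ _
  set FA : {e // e ∈ M} → {x // x ∈ A} := fun e => ⟨fa e, hfa e⟩ with hFA
  set FB : {e // e ∈ M} → {x // x ∈ B} := fun e => ⟨fb e, hfb e⟩ with hFB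
  have injA : Function.Injective FA := by
    intro e e' h
    have h' : fa e = fa e' := congrArg Subtype.val h
    exact hdisjedge e e' (fa e) (hfamem e) (by rw [h']; exact hfamem e')
  have injB : Function.Injective FB := by
    intro e e' h
    have h' : fb e = fb e' := congrArg Subtype.val h
    exact hdisjedge e e' (fb e) (hfbmem e) (h' ▸ hfbmem e')
  set p : {x // x ∈ A} → Prop := fun a => a ∈ Set.range FA with hp
  set q : {x // x ∈ B} → Prop := fun b => b ∈ Set.range FB with hq
  set e1 : {a // p a} ≃ {b // q b} :=
    (Equiv.ofInjective FA injA).symm.trans (Equiv.ofInjective FB injB) with he1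
  have cardp : Fintype.card {a // p a} = M.card := by
    rw [Fintype.card_congr (Equiv.ofInjective FA injA).symm, Fintype.card_coe]
  have cardq : Fintype.card {b // q b} = M.card := by
    rw [Fintype.card_congr (Equiv.ofInjective FB injB).symm, Fintype.card_coe]
  have cardcompl : Fintype.card {a // ¬ p a} = Fintype.card {b // ¬ q b} := by
    rw [Fintype.card_subtype_compl, Fintype.card_subtype_compl, cardp, cardq,
      Fintype.card_coe, Fintype.card_coe, hA, hB]
  set e2 : {a // ¬ p a} ≃ {b // ¬ q b} := Fintype.equivOfCardEq cardcompl with he2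
  set σ : {x // x ∈ A} ≃ {x // x ∈ B} :=
    (Equiv.sumCompl p).symm.trans ((e1.sumCongr e2).trans (Equiv.sumCompl q)) with hσdef
  have hσ : ∀ (a : {x // x ∈ A}), p a → G.Adj (a : V) ((σ a : V)) := by
    intro a ha
    have h1 : (Equiv.sumCompl p).symm a = Sum.inl ⟨a, ha⟩ :=
      Equiv.sumCompl_symm_apply_of_pos (p := p) ha
    have h2 : σ a = (e1 ⟨a, ha⟩ : {x // x ∈ B}) := by
      rw [hσdef]
      simp [h1]
    set e : {e // e ∈ M} := (Equiv.ofInjective FA injA).symm ⟨a, ha⟩ with he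
    have h3 : FA e = a := Equiv.apply_ofInjective_symm injA ⟨a, ha⟩
    have h4 : (e1 ⟨a, ha⟩ : {x // x ∈ B}) = FB e := rfl
    rw [h2, h4, ← h3]
    exact hadj e
  have hge : M.card ≤ (Finset.univ.filter fun a : {x // x ∈ A} =>
      G.Adj (a : V) ((σ a : V))).card := by
    have hsub : (Finset.univ.filter fun a : {x // x ∈ A} => p a)
        ⊆ Finset.univ.filter fun a : {x // x ∈ A} => G.Adj (a : V) ((σ a : V)) := by
      intro a ha
      simp only [Finset.mem_filter, Finset.mem_univ, true_and] at ha ⊢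
      exact hσ a ha
    rw [← cardp]
    have h5 : Fintype.card {a : {x // x ∈ A} // G.Adj (a : V) ((σ a : V))}
        = (Finset.univ.filter fun a : {x // x ∈ A} => G.Adj (a : V) ((σ a : V))).card :=
      Fintype.card_subtype _
    rw [← h5]
    refine Fintype.card_le_of_injective (fun x => ⟨x.1, hσ x.1 x.2⟩) ?_
    intro x y h
    simp only [Subtype.mk.injEq] at h
    exact Subtype.ext h
  constructor
  · refine ⟨σ, ?_⟩
    rw [hsum σ]
    have hcc : (Finset.univ.filter fun a : {x // x ∈ A} =>
        G.Adj (a : V) ((σ a : V))).card = matchNum G :=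
      le_antisymm (hle σ) (hMcard ▸ hge)
    rw [hcc]
  · rintro t ⟨σ', rfl⟩
    rw [hsum σ']
    have h := hle σ'
    have h' : ((Finset.univ.filter fun a : {x // x ∈ A} =>
        G.Adj (a : V) ((σ' a : V))).card : ℝ) ≤ (matchNum G : ℝ) := by
      exact_mod_cast h
    linarith
end

section
/- Let p be the uniform distribution on A and q the uniform distribution on B. Then EMD(p, q) = (2n − μ(G)) / (2n). -/
section AuxEMD

lemma defectHall {ι β : Type*} [Fintype ι] [DecidableEq β] [Nonempty β]
    (t : ι → Finset β) (D : ℕ)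
    (hD : ∀ s : Finset ι, s.card ≤ (s.biUnion t).card + D) :
    ∃ (s : Finset ι) (g : ι → β), Fintype.card ι ≤ s.card + D ∧
      Set.InjOn g ↑s ∧ ∀ i ∈ s, g i ∈ t i := by
  classical
  set emb1 : β ↪ β ⊕ Fin D := ⟨Sum.inl, Sum.inl_injective⟩ with hemb1
  set emb2 : Fin D ↪ β ⊕ Fin D := ⟨Sum.inr, Sum.inr_injective⟩ with hemb2
  set t' : ι → Finset (β ⊕ Fin D) :=
    fun i => (t i).map emb1 ∪ Finset.univ.map emb2 with ht'
  have hall : ∀ s : Finset ι, s.card ≤ (s.biUnion t').card := by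
    intro s
    rcases s.eq_empty_or_nonempty with rfl | ⟨i0, hi0⟩
    · simp
    · have hsub : (s.biUnion t).map emb1 ∪ Finset.univ.map emb2 ⊆ s.biUnion t' := by
        intro x hx
        rcases Finset.mem_union.1 hx with hx | hx
        · obtain ⟨b, hb, rfl⟩ := Finset.mem_map.1 hx
          obtain ⟨i, hi, hbi⟩ := Finset.mem_biUnion.1 hb
          exact Finset.mem_biUnion.2 ⟨i, hi, Finset.mem_union_left _ (Finset.mem_map_of_mem _ hbi)⟩
        · exact Finset.mem_biUnion.2 ⟨i0, hi0, Finset.mem_union_right _ hx⟩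
      have hdisj : Disjoint ((s.biUnion t).map emb1) (Finset.univ.map emb2) := by
        rw [Finset.disjoint_left]
        rintro x hx hx'
        obtain ⟨b, _, rfl⟩ := Finset.mem_map.1 hx
        obtain ⟨c, _, hc⟩ := Finset.mem_map.1 hx'
        exact absurd hc (by simp [hemb1, hemb2])
      calc s.card ≤ (s.biUnion t).card + D := hD s
        _ = ((s.biUnion t).map emb1 ∪ Finset.univ.map emb2).card := by
            rw [Finset.card_union_of_disjoint hdisj, Finset.card_map, Finset.card_map,
              Finset.card_univ, Fintype.card_fin]
        _ ≤ _ := Finset.card_le_card hsub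
  obtain ⟨f, hfinj, hf⟩ := (Finset.all_card_le_biUnion_card_iff_exists_injective t').1 hall
  set s : Finset ι := Finset.univ.filter (fun i => (f i).isLeft) with hs
  have hmem : ∀ i ∈ s, ∃ b, f i = Sum.inl b ∧ b ∈ t i := by
    intro i hi
    obtain ⟨b, hb⟩ := Sum.isLeft_iff.1 ((Finset.mem_filter.1 hi).2)
    refine ⟨b, hb, ?_⟩
    have := hf i
    rw [hb] at this
    rcases Finset.mem_union.1 this with h | h
    · obtain ⟨b', hb', he⟩ := Finset.mem_map.1 h
      obtain rfl : b' = b := by simpa [hemb1] using he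
      exact hb'
    · obtain ⟨c, _, hc⟩ := Finset.mem_map.1 h
      exact absurd hc (by simp [hemb2])
  refine ⟨s, fun i => (f i).elim id (fun _ => Classical.arbitrary β), ?_, ?_, ?_⟩
  · have h1 : sᶜ.card ≤ D := by
      have hsub : Finset.image f sᶜ ⊆ Finset.univ.map emb2 := by
        intro x hx
        obtain ⟨i, hi, rfl⟩ := Finset.mem_image.1 hx
        have : ¬ (f i).isLeft := by
          intro h
          exact (Finset.mem_compl.1 hi) (Finset.mem_filter.2 ⟨Finset.mem_univ _, h⟩)
        obtain ⟨c, hc⟩ := Sum.isRight_iff.1 (Sum.not_isLeft.1 this)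
        rw [hc]
        exact Finset.mem_map.2 ⟨c, Finset.mem_univ _, rfl⟩
      calc sᶜ.card = (Finset.image f sᶜ).card := (Finset.card_image_of_injective _ hfinj).symm
        _ ≤ (Finset.univ.map emb2).card := Finset.card_le_card hsub
        _ = D := by rw [Finset.card_map, Finset.card_univ, Fintype.card_fin]
    have := Finset.card_add_card_compl s
    omega
  · intro i hi j hj hij
    obtain ⟨b, hb, _⟩ := hmem i (Finset.mem_coe.1 hi)
    obtain ⟨b', hb', _⟩ := hmem j (Finset.mem_coe.1 hj)
    apply hfinj
    simp only [hb, hb'] at hij ⊢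
    simpa using hij
  · intro i hi
    obtain ⟨b, hb, hbt⟩ := hmem i hi
    simpa [hb] using hbt

lemma isGMatching_empty {V : Type*} (G : SimpleGraph V) : IsGMatching G ∅ := by
  constructor
  · intro e he; exact absurd he (Finset.notMem_empty e)
  · intro e he; exact absurd he (Finset.notMem_empty e)

lemma card_le_matchNum {V : Type*} [Fintype V] [DecidableEq V] (G : SimpleGraph V)
    (M : Finset (Sym2 V)) (h : IsGMatching G M) : M.card ≤ matchNum G := by
  apply le_csSup ⟨Fintype.card (Sym2 V), _⟩ (⟨M, h, rfl⟩ :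
    M.card ∈ {k | ∃ M : Finset (Sym2 V), IsGMatching G M ∧ M.card = k})
  rintro k ⟨N, _, rfl⟩; exact Finset.card_le_univ N

lemma exists_max_matching {V : Type*} [Fintype V] [DecidableEq V] (G : SimpleGraph V) :
    ∃ M : Finset (Sym2 V), IsGMatching G M ∧ M.card = matchNum G := by
  have h : matchNum G ∈ {k | ∃ M : Finset (Sym2 V), IsGMatching G M ∧ M.card = k} := by
    apply Nat.sSup_mem
    · exact ⟨0, ∅, isGMatching_empty G, Finset.card_empty⟩
    · exact ⟨Fintype.card (Sym2 V), by rintro k ⟨N, _, rfl⟩; exact Finset.card_le_univ N⟩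
  exact h

lemma matching_of_fun {V : Type*} [DecidableEq V] (G : SimpleGraph V)
    (A B : Finset V) (hdisj : Disjoint A B)
    (s : Finset V) (g : V → V) (hsA : s ⊆ A) (hgB : ∀ a ∈ s, g a ∈ B)
    (hadj : ∀ a ∈ s, G.Adj a (g a)) (hinj : Set.InjOn g ↑s) :
    IsGMatching G (s.image (fun a => s(a, g a))) ∧
      (s.image fun a => s(a, g a)).card = s.card := by
  have hAB : ∀ {x y : V}, x ∈ A → y ∈ B → x ≠ y := by
    intro x y hx hy h
    exact Finset.disjoint_left.1 hdisj hx (h ▸ hy)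
  constructor
  · constructor
    · intro e he
      obtain ⟨a, ha, rfl⟩ := Finset.mem_image.1 he
      exact (G.mem_edgeSet).2 (hadj a ha)
    · intro e he f hf hef v hv hv'
      obtain ⟨a, ha, rfl⟩ := Finset.mem_image.1 he
      obtain ⟨a', ha', rfl⟩ := Finset.mem_image.1 hf
      rcases Sym2.mem_iff.1 hv with rfl | rfl
      · rcases Sym2.mem_iff.1 hv' with h | h
        · exact hef (by rw [h])
        · exact hAB (hsA ha) (hgB a' ha') h
      · rcases Sym2.mem_iff.1 hv' with h | h
        · exact hAB (hsA ha') (hgB a ha) h.symm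
        · exact hef (by rw [hinj ha ha' h])
  · apply Finset.card_image_of_injOn
    intro a ha a' ha' h
    rcases Sym2.eq_iff.1 h with ⟨h1, _⟩ | ⟨h1, h2⟩
    · exact h1
    · exact absurd h1 (hAB (hsA ha) (hgB a' ha'))

lemma fun_of_matching {V : Type*} [Fintype V] [DecidableEq V] (G : SimpleGraph V)
    (A B : Finset V) (hdisj : Disjoint A B)
    (hbip : ∀ u v : V, G.Adj u v → (u ∈ A ∧ v ∈ B) ∨ (u ∈ B ∧ v ∈ A))
    (M : Finset (Sym2 V)) (hM : IsGMatching G M) :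
    ∃ (s : Finset V) (g : V → V), s ⊆ A ∧
      (∀ a ∈ s, g a ∈ B ∧ G.Adj a (g a) ∧ s(a, g a) ∈ M) ∧
      Set.InjOn g ↑s ∧ s.card = M.card ∧
      (∀ a ∈ A, ((∃ e ∈ M, a ∈ e) ↔ a ∈ s)) ∧
      (∀ b ∈ B, ((∃ e ∈ M, b ∈ e) ↔ b ∈ s.image g)) := by
  classical
  have key : ∀ a ∈ A, (∃ e ∈ M, a ∈ e) → ∃ b, b ∈ B ∧ G.Adj a b ∧ s(a, b) ∈ M := by
    intro a ha ⟨e, he, hae⟩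
    have hadj : G.Adj a (Sym2.Mem.other hae) := by
      have := hM.1 e he
      rw [← Sym2.other_spec hae] at this
      exact (G.mem_edgeSet).1 this
    refine ⟨Sym2.Mem.other hae, ?_, hadj, by rw [Sym2.other_spec hae]; exact he⟩
    rcases hbip _ _ hadj with ⟨_, hb⟩ | ⟨ha', _⟩
    · exact hb
    · exact absurd ha' (Finset.disjoint_left.1 hdisj ha)
  set s : Finset V := A.filter (fun a => ∃ e ∈ M, a ∈ e) with hs
  set g : V → V := fun a =>
    if h : ∃ b, b ∈ B ∧ G.Adj a b ∧ s(a, b) ∈ M then h.choose else a with hg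
  have hgspec : ∀ a ∈ s, g a ∈ B ∧ G.Adj a (g a) ∧ s(a, g a) ∈ M := by
    intro a ha
    obtain ⟨haA, hae⟩ := Finset.mem_filter.1 ha
    have h := key a haA hae
    rw [hg]
    simp only [dif_pos h]
    exact h.choose_spec
  have hAB : ∀ {x y : V}, x ∈ A → y ∈ B → x ≠ y := by
    intro x y hx hy h
    exact Finset.disjoint_left.1 hdisj hx (h ▸ hy)
  have hsA : s ⊆ A := Finset.filter_subset _ _
  have horient : ∀ e ∈ M, ∃ x y, x ∈ A ∧ y ∈ B ∧ e = s(x, y) := by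
    intro e he
    induction e using Sym2.inductionOn with
    | hf x y =>
      have hadj : G.Adj x y := (G.mem_edgeSet).1 (hM.1 _ he)
      rcases hbip _ _ hadj with ⟨hx, hy⟩ | ⟨hx, hy⟩
      · exact ⟨x, y, hx, hy, rfl⟩
      · exact ⟨y, x, hy, hx, Sym2.eq_swap⟩
  have huniq : ∀ a ∈ s, ∀ e ∈ M, a ∈ e → e = s(a, g a) := by
    intro a ha e he hae
    by_contra hne
    exact hM.2 e he _ (hgspec a ha).2.2 hne a hae (Sym2.mem_mk_left a (g a))
  have hMeq : M = s.image (fun a => s(a, g a)) := by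
    apply Finset.Subset.antisymm
    · intro e he
      obtain ⟨x, y, hx, hy, rfl⟩ := horient e he
      have hxs : x ∈ s := Finset.mem_filter.2 ⟨hx, ⟨_, he, Sym2.mem_mk_left x y⟩⟩
      have := huniq x hxs _ he (Sym2.mem_mk_left x y)
      rw [this]
      exact Finset.mem_image_of_mem _ hxs
    · intro e he
      obtain ⟨a, ha, rfl⟩ := Finset.mem_image.1 he
      exact (hgspec a ha).2.2
  have hinj : Set.InjOn g ↑s := by
    intro a ha a' ha' h
    rw [Finset.mem_coe] at ha ha'
    by_contra hne
    have hne' : s(a, g a) ≠ s(a', g a') := by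
      intro hh
      rcases Sym2.eq_iff.1 hh with ⟨h1, _⟩ | ⟨h1, _⟩
      · exact hne h1
      · exact hAB (hsA ha) (hgspec a' ha').1 h1
    refine hM.2 _ (hgspec a ha).2.2 _ (hgspec a' ha').2.2 hne' (g a)
      (Sym2.mem_mk_right a (g a)) ?_
    rw [h]
    exact Sym2.mem_mk_right a' (g a')
  refine ⟨s, g, hsA, hgspec, hinj, ?_, ?_, ?_⟩
  · rw [hMeq]
    symm
    apply Finset.card_image_of_injOn
    intro a ha a' ha' h
    rcases Sym2.eq_iff.1 h with ⟨h1, _⟩ | ⟨h1, _⟩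
    · exact h1
    · exact absurd h1 (hAB (hsA ha) (hgspec a' ha').1)
  · intro a ha
    constructor
    · intro hae
      exact Finset.mem_filter.2 ⟨ha, hae⟩
    · intro has
      exact (Finset.mem_filter.1 has).2
  · intro b hb
    constructor
    · rintro ⟨e, he, hbe⟩
      have := hMeq ▸ he
      obtain ⟨a, ha, rfl⟩ := Finset.mem_image.1 this
      rcases Sym2.mem_iff.1 hbe with rfl | rfl
      · exact absurd rfl (hAB (hsA ha) hb).symm
      · exact Finset.mem_image_of_mem _ ha
    · rintro hbs
      obtain ⟨a, ha, rfl⟩ := Finset.mem_image.1 hbs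
      exact ⟨s(a, g a), (hgspec a ha).2.2, Sym2.mem_mk_right a (g a)⟩

end AuxEMD

/-- For a bipartite graph `G` with parts `A`, `B` of size `n ≥ 1`, with
`d(a,b) = 1/2` if `ab` is an edge and `1` otherwise, the earth mover's distance
between the uniform distributions on `A` and on `B` — i.e. the minimum of
`∑ φ(a,b) d(a,b)` over all couplings `φ` (nonnegative, with all row sums and
column sums equal to `1/n`) — equals `(2n − μ(G)) / (2n)`. -/
theorem emd_uniform_eq
    {V : Type*} [Fintype V] [DecidableEq V]
    (G : SimpleGraph V) [DecidableRel G.Adj]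
    (A B : Finset V) (n : ℕ) (hn : 1 ≤ n)
    (hA : A.card = n) (hB : B.card = n)
    (hdisj : Disjoint A B) (hcover : A ∪ B = Finset.univ)
    (hbip : ∀ u v : V, G.Adj u v → (u ∈ A ∧ v ∈ B) ∨ (u ∈ B ∧ v ∈ A))
    (d : V → V → ℝ)
    (hd : ∀ a ∈ A, ∀ b ∈ B, d a b = if G.Adj a b then 1 / 2 else 1) :
    IsLeast
      {t : ℝ | ∃ φ : {x // x ∈ A} → {x // x ∈ B} → ℝ,
        (∀ a b, 0 ≤ φ a b) ∧
        (∀ a, ∑ b : {x // x ∈ B}, φ a b = 1 / (n : ℝ)) ∧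
        (∀ b, ∑ a : {x // x ∈ A}, φ a b = 1 / (n : ℝ)) ∧
        t = ∑ a : {x // x ∈ A}, ∑ b : {x // x ∈ B}, φ a b * d (a : V) (b : V)}
      ((2 * (n : ℝ) - (matchNum G : ℝ)) / (2 * (n : ℝ))) := by
  classical
  have hn0 : (0:ℝ) < n := by exact_mod_cast Nat.lt_of_lt_of_le Nat.zero_lt_one hn
  obtain ⟨Mmax, hMmax, hMcard⟩ := exists_max_matching G
  obtain ⟨s, g, hsA, hgs, hginj, hscard, hcharA, hcharB⟩ :=
    fun_of_matching G A B hdisj hbip Mmax hMmax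
  set μ := matchNum G with hμ
  have hscardμ : s.card = μ := by rw [hscard, hMcard]
  have hμn : μ ≤ n := by rw [← hscardμ, ← hA]; exact Finset.card_le_card hsA
  have hμr : (μ:ℝ) ≤ n := by exact_mod_cast hμn
  have himgB : s.image g ⊆ B := by
    intro b hb
    obtain ⟨a, ha, rfl⟩ := Finset.mem_image.1 hb
    exact (hgs a ha).1
  have himgcard : (s.image g).card = μ := by
    rw [Finset.card_image_of_injOn hginj, hscardμ]
  -- no edge between unmatched vertices
  have hfree : ∀ a ∈ A, a ∉ s → ∀ b ∈ B, b ∉ s.image g → ¬ G.Adj a b := by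
    intro a ha has b hb hbs hadj
    have haM : ¬ ∃ e ∈ Mmax, a ∈ e := fun h => has ((hcharA a ha).1 h)
    have hbM : ¬ ∃ e ∈ Mmax, b ∈ e := fun h => hbs ((hcharB b hb).1 h)
    have hnew : s(a, b) ∉ Mmax := fun h => haM ⟨_, h, Sym2.mem_mk_left a b⟩
    have hmatch : IsGMatching G (insert s(a,b) Mmax) := by
      constructor
      · intro e he
        rcases Finset.mem_insert.1 he with rfl | he
        · exact (G.mem_edgeSet).2 hadj
        · exact hMmax.1 e he
      · intro e he f hf hef v hv hv'
        rcases Finset.mem_insert.1 he with he1 | he1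
        · subst he1
          rcases Finset.mem_insert.1 hf with hf1 | hf1
          · exact (hef hf1.symm).elim
          · rcases Sym2.mem_iff.1 hv with rfl | rfl
            · exact haM ⟨f, hf1, hv'⟩
            · exact hbM ⟨f, hf1, hv'⟩
        · rcases Finset.mem_insert.1 hf with hf1 | hf1
          · subst hf1
            rcases Sym2.mem_iff.1 hv' with rfl | rfl
            · exact (haM ⟨e, he1, hv⟩).elim
            · exact (hbM ⟨e, he1, hv⟩).elim
          · exact hMmax.2 e he1 f hf1 hef v hv hv'
    have hle := card_le_matchNum G _ hmatch
    rw [Finset.card_insert_of_notMem hnew, hMcard] at hle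
    omega
  constructor
  · -- membership : explicit optimal coupling
    set c2 : ℝ := 1/(n * ((n:ℝ) - μ)) with hc2
    have hc2nonneg : 0 ≤ c2 := by
      apply one_div_nonneg.2
      apply mul_nonneg hn0.le
      linarith
    set F : V → V → ℝ := fun x y =>
      if x ∈ s ∧ y = g x then 1/(n:ℝ)
      else if x ∉ s ∧ y ∉ s.image g then c2 else 0 with hF
    have hFnonneg : ∀ x y, 0 ≤ F x y := by
      intro x y
      rw [hF]
      dsimp only
      split_ifs
      · positivity
      · exact hc2nonneg
      · exact le_refl 0
    -- the key count for unmatched rows / columns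
    have hcount : (B \ s.image g).card = n - μ := by
      rw [Finset.card_sdiff_of_subset himgB, hB, himgcard]
    have hcountA : (A \ s).card = n - μ := by
      rw [Finset.card_sdiff_of_subset hsA, hA, hscardμ]
    have hc2sum : μ < n → ((n - μ : ℕ) : ℝ) * c2 = 1/n := by
      intro hμlt
      rw [hc2, Nat.cast_sub hμn]
      have h1 : ((n:ℝ) - μ) ≠ 0 := by
        have : (μ:ℝ) < n := by exact_mod_cast hμlt
        linarith
      field_simp
    -- unmatched-row sums
    have hZB : ∀ x ∈ A, x ∉ s →
        ∑ y ∈ B, (if y ∈ s.image g then (0:ℝ) else c2) = 1/n := by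
      intro x hx hxs
      have hμlt : μ < n := by
        rw [← hscardμ, ← hA]
        exact Finset.card_lt_card ((Finset.ssubset_iff_of_subset hsA).2 ⟨x, hx, hxs⟩)
      rw [Finset.sum_ite, Finset.sum_const, Finset.sum_const, smul_zero, zero_add]
      have hfilt : B.filter (fun y => ¬ y ∈ s.image g) = B \ s.image g := by
        ext y; simp [Finset.mem_sdiff]
      rw [hfilt, hcount, nsmul_eq_mul]
      exact hc2sum hμlt
    have hZA : ∀ y ∈ B, y ∉ s.image g →
        ∑ x ∈ A, (if x ∈ s then (0:ℝ) else c2) = 1/n := by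
      intro y hy hys
      have hμlt : μ < n := by
        rw [← himgcard, ← hB]
        exact Finset.card_lt_card ((Finset.ssubset_iff_of_subset himgB).2 ⟨y, hy, hys⟩)
      rw [Finset.sum_ite, Finset.sum_const, Finset.sum_const, smul_zero, zero_add]
      have hfilt : A.filter (fun x => ¬ x ∈ s) = A \ s := by
        ext x; simp [Finset.mem_sdiff]
      rw [hfilt, hcountA, nsmul_eq_mul]
      exact hc2sum hμlt
    -- row sums
    have hrowA : ∀ x ∈ A, ∑ y ∈ B, F x y = 1/n := by
      intro x hx
      by_cases hxs : x ∈ s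
      · rw [Finset.sum_eq_single_of_mem (g x) (hgs x hxs).1]
        · rw [hF]; dsimp only; rw [if_pos ⟨hxs, rfl⟩]
        · intro y hy hne
          rw [hF]; dsimp only
          rw [if_neg (by tauto), if_neg (by tauto)]
      · have hFx : ∀ y ∈ B, F x y = if y ∈ s.image g then (0:ℝ) else c2 := by
          intro y hy
          rw [hF]; dsimp only
          rw [if_neg (by tauto)]
          by_cases h : y ∈ s.image g
          · rw [if_neg (by tauto), if_pos h]
          · rw [if_pos ⟨hxs, h⟩, if_neg h]
        rw [Finset.sum_congr rfl hFx]
        exact hZB x hx hxs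
    -- column sums
    have hcolB : ∀ y ∈ B, ∑ x ∈ A, F x y = 1/n := by
      intro y hy
      by_cases hyt : y ∈ s.image g
      · obtain ⟨a0, ha0, rfl⟩ := Finset.mem_image.1 hyt
        rw [Finset.sum_eq_single_of_mem a0 (hsA ha0)]
        · rw [hF]; dsimp only; rw [if_pos ⟨ha0, rfl⟩]
        · intro x hx hne
          rw [hF]; dsimp only
          have h1 : ¬ (x ∈ s ∧ g a0 = g x) := by
            rintro ⟨hxsmem, heq⟩
            exact hne (hginj hxsmem ha0 heq.symm)
          rw [if_neg h1, if_neg (by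
            rintro ⟨_, hna⟩
            exact hna (Finset.mem_image_of_mem g ha0))]
      · have hFy : ∀ x ∈ A, F x y = if x ∈ s then (0:ℝ) else c2 := by
          intro x hx
          rw [hF]; dsimp only
          have h1 : ¬ (x ∈ s ∧ y = g x) := by
            rintro ⟨hxsmem, rfl⟩
            exact hyt (Finset.mem_image_of_mem g hxsmem)
          rw [if_neg h1]
          by_cases h : x ∈ s
          · rw [if_neg (by tauto), if_pos h]
          · rw [if_pos ⟨h, hyt⟩, if_neg h]
        rw [Finset.sum_congr rfl hFy]
        exact hZA y hy hyt
    -- cost rows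
    have hcostA : ∀ x ∈ A, ∑ y ∈ B, F x y * d x y =
        if x ∈ s then 1/(2*(n:ℝ)) else 1/n := by
      intro x hx
      by_cases hxs : x ∈ s
      · rw [if_pos hxs, Finset.sum_eq_single_of_mem (g x) (hgs x hxs).1]
        · rw [hF]; dsimp only
          rw [if_pos ⟨hxs, rfl⟩, hd x hx (g x) (hgs x hxs).1, if_pos (hgs x hxs).2.1]
          ring
        · intro y hy hne
          rw [hF]; dsimp only
          rw [if_neg (by tauto), if_neg (by tauto), zero_mul]
      · rw [if_neg hxs]
        have hFx : ∀ y ∈ B, F x y * d x y = if y ∈ s.image g then (0:ℝ) else c2 := by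
          intro y hy
          rw [hF]; dsimp only
          rw [if_neg (by tauto)]
          by_cases h : y ∈ s.image g
          · rw [if_neg (by tauto), if_pos h, zero_mul]
          · rw [if_pos ⟨hxs, h⟩, if_neg h, hd x hx y hy,
              if_neg (hfree x hx hxs y hy h), mul_one]
        rw [Finset.sum_congr rfl hFx]
        exact hZB x hx hxs
    -- total cost
    have htotal : ∑ x ∈ A, (if x ∈ s then 1/(2*(n:ℝ)) else 1/n) =
        (2 * (n : ℝ) - μ) / (2 * n) := by
      rw [Finset.sum_ite, Finset.sum_const, Finset.sum_const]
      have hf1 : A.filter (fun x => x ∈ s) = s := by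
        ext x
        simp only [Finset.mem_filter]
        exact ⟨fun h => h.2, fun h => ⟨hsA h, h⟩⟩
      have hf2 : A.filter (fun x => ¬ x ∈ s) = A \ s := by
        ext x; simp [Finset.mem_sdiff]
      rw [hf1, hf2, hcountA, hscardμ, nsmul_eq_mul, nsmul_eq_mul, Nat.cast_sub hμn]
      field_simp
      ring
    refine ⟨fun a b => F ↑a ↑b, fun a b => hFnonneg ↑a ↑b, ?_, ?_, ?_⟩
    · intro a
      rw [← Finset.sum_subtype B (fun _ => Iff.rfl) (F ↑a)]
      exact hrowA ↑a a.2
    · intro b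
      rw [← Finset.sum_subtype A (fun _ => Iff.rfl) (fun x => F x ↑b)]
      exact hcolB ↑b b.2
    · have hinner : ∀ a : {x // x ∈ A}, ∑ b : {x // x ∈ B}, F ↑a ↑b * d ↑a ↑b =
          if (a:V) ∈ s then 1/(2*(n:ℝ)) else 1/n := by
        intro a
        rw [← Finset.sum_subtype B (fun _ => Iff.rfl) (fun y => F ↑a y * d ↑a y)]
        exact hcostA ↑a a.2
      rw [Finset.sum_congr rfl (fun a _ => hinner a),
        ← Finset.sum_subtype A (fun _ => Iff.rfl)
          (fun x => if x ∈ s then 1/(2*(n:ℝ)) else 1/n), htotal]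
  · -- lower bound
    rintro x ⟨φ, hpos, hrow, hcol, rfl⟩
    set N : {x // x ∈ A} → Finset {x // x ∈ B} :=
      fun a => Finset.univ.filter (fun b => G.Adj ↑a ↑b) with hN
    have hcardA' : Fintype.card {x // x ∈ A} = n := by
      rw [Fintype.card_coe, hA]
    have hcardB' : Fintype.card {x // x ∈ B} = n := by
      rw [Fintype.card_coe, hB]
    obtain ⟨s₁, -, hs₁max⟩ := Finset.exists_max_image
      (Finset.univ : Finset (Finset {x // x ∈ A}))
      (fun t => t.card - (t.biUnion N).card) ⟨∅, Finset.mem_univ ∅⟩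
    set s₀ := if (s₁.biUnion N).card ≤ s₁.card then s₁ else ∅ with hs₀
    have hbiU : (s₀.biUnion N).card ≤ s₀.card := by
      rw [hs₀]; split_ifs with h
      · exact h
      · simp
    have hmax : ∀ t : Finset {x // x ∈ A},
        t.card - (t.biUnion N).card ≤ s₀.card - (s₀.biUnion N).card := by
      intro t
      have h1 := hs₁max t (Finset.mem_univ t)
      rw [hs₀]; split_ifs with h
      · exact h1
      · simp only [Finset.biUnion_empty, Finset.card_empty]
        omega
    set D := s₀.card - (s₀.biUnion N).card with hD
    have hDHall : ∀ t : Finset {x // x ∈ A},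
        t.card ≤ (t.biUnion N).card + D := by
      intro t
      have := hmax t
      omega
    have hBne : Nonempty {x // x ∈ B} := by
      have hBn : B.Nonempty := by rw [← Finset.card_pos, hB]; omega
      obtain ⟨b, hb⟩ := hBn
      exact ⟨⟨b, hb⟩⟩
    obtain ⟨s', g', hcard', hinj', hmem'⟩ := defectHall N D hDHall
    -- convert to a matching of G
    have hgadj : ∀ a ∈ s', G.Adj ↑a ↑(g' a) := by
      intro a ha
      have := hmem' a ha
      rw [hN] at this
      exact (Finset.mem_filter.1 this).2
    set gV : V → V := fun v => if h : v ∈ A then ↑(g' ⟨v, h⟩) else v with hgV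
    have hgVval : ∀ a : {x // x ∈ A}, gV ↑a = ↑(g' a) := by
      intro a
      rw [hgV]
      dsimp only
      rw [dif_pos a.2]
    have hmOf := matching_of_fun G A B hdisj (s'.image Subtype.val) gV
      (by
        intro v hv
        obtain ⟨a, _, rfl⟩ := Finset.mem_image.1 hv
        exact a.2)
      (by
        intro v hv
        obtain ⟨a, ha, rfl⟩ := Finset.mem_image.1 hv
        rw [hgVval a]
        exact (g' a).2)
      (by
        intro v hv
        obtain ⟨a, ha, rfl⟩ := Finset.mem_image.1 hv
        rw [hgVval a]
        exact hgadj a ha)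
      (by
        intro v hv w hw heq
        rw [Finset.coe_image] at hv hw
        obtain ⟨a, ha, rfl⟩ := hv
        obtain ⟨a', ha', rfl⟩ := hw
        rw [hgVval a, hgVval a'] at heq
        have : g' a = g' a' := Subtype.coe_injective heq
        exact congrArg _ (hinj' ha ha' this)
      )
    have hsVcard : (s'.image Subtype.val).card = s'.card :=
      Finset.card_image_of_injOn (fun a _ a' _ h => Subtype.coe_injective h)
    have hs'μ : s'.card ≤ μ := by
      have := card_le_matchNum G _ hmOf.1
      rw [hmOf.2, hsVcard] at this
      exact this
    have hnμD : n ≤ μ + D := by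
      rw [← hcardA']
      calc Fintype.card {x // x ∈ A} ≤ s'.card + D := hcard'
        _ ≤ μ + D := by omega
    have hs₀n : s₀.card ≤ n := by
      rw [← hcardA']
      exact Finset.card_le_univ s₀
    -- the covering bound
    have hkey : (s₀.biUnion N).card + (n - s₀.card) ≤ μ := by omega
    set Sadj : ℝ := ∑ a : {x // x ∈ A}, ∑ b : {x // x ∈ B},
      (if G.Adj ↑a ↑b then φ a b else 0) with hSadj
    have hinner_cover : ∀ a : {x // x ∈ A}, a ∈ s₀ →
        (∑ b : {x // x ∈ B}, if G.Adj ↑a ↑b then φ a b else 0) ≤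
          ∑ b ∈ s₀.biUnion N, φ a b := by
      intro a ha
      have h1 : (∑ b : {x // x ∈ B}, if G.Adj ↑a ↑b then φ a b else 0) =
          ∑ b ∈ N a, φ a b := by
        rw [hN]
        exact (Finset.sum_filter _ _).symm
      rw [h1]
      apply Finset.sum_le_sum_of_subset_of_nonneg
        (Finset.subset_biUnion_of_mem N ha)
      intro b _ _
      exact hpos a b
    have hinner_le : ∀ a : {x // x ∈ A},
        (∑ b : {x // x ∈ B}, if G.Adj ↑a ↑b then φ a b else 0) ≤ 1/n := by
      intro a
      rw [← hrow a]
      apply Finset.sum_le_sum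
      intro b _
      split_ifs
      · exact le_refl _
      · exact hpos a b
    have hSadj_le : Sadj ≤ (μ:ℝ) / n := by
      rw [hSadj, ← Finset.sum_filter_add_sum_filter_not Finset.univ (fun a => a ∈ s₀)]
      have hpart1 : ∑ a ∈ Finset.univ.filter (fun a => a ∈ s₀),
          (∑ b : {x // x ∈ B}, if G.Adj ↑a ↑b then φ a b else 0) ≤
          ((s₀.biUnion N).card : ℝ) * (1/n) := by
        calc ∑ a ∈ Finset.univ.filter (fun a => a ∈ s₀),
            (∑ b : {x // x ∈ B}, if G.Adj ↑a ↑b then φ a b else 0)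
            ≤ ∑ a ∈ Finset.univ.filter (fun a => a ∈ s₀),
              ∑ b ∈ s₀.biUnion N, φ a b := by
              apply Finset.sum_le_sum
              intro a ha
              exact hinner_cover a (Finset.mem_filter.1 ha).2
          _ ≤ ∑ a : {x // x ∈ A}, ∑ b ∈ s₀.biUnion N, φ a b := by
              apply Finset.sum_le_sum_of_subset_of_nonneg (Finset.filter_subset _ _)
              intro a _ _
              apply Finset.sum_nonneg
              intro b _
              exact hpos a b
          _ = ∑ b ∈ s₀.biUnion N, ∑ a : {x // x ∈ A}, φ a b := Finset.sum_comm
          _ = ∑ b ∈ s₀.biUnion N, 1/(n:ℝ) := Finset.sum_congr rfl (fun b _ => hcol b)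
          _ = ((s₀.biUnion N).card : ℝ) * (1/n) := by
              rw [Finset.sum_const, nsmul_eq_mul]
      have hpart2 : ∑ a ∈ Finset.univ.filter (fun a => ¬ a ∈ s₀),
          (∑ b : {x // x ∈ B}, if G.Adj ↑a ↑b then φ a b else 0) ≤
          ((n - s₀.card : ℕ) : ℝ) * (1/n) := by
        calc ∑ a ∈ Finset.univ.filter (fun a => ¬ a ∈ s₀),
            (∑ b : {x // x ∈ B}, if G.Adj ↑a ↑b then φ a b else 0)
            ≤ ∑ a ∈ Finset.univ.filter (fun a => ¬ a ∈ s₀), 1/(n:ℝ) :=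
              Finset.sum_le_sum (fun a _ => hinner_le a)
          _ = ((Finset.univ.filter (fun a => ¬ a ∈ s₀)).card : ℝ) * (1/n) := by
              rw [Finset.sum_const, nsmul_eq_mul]
          _ = ((n - s₀.card : ℕ) : ℝ) * (1/n) := by
              congr 2
              have := Finset.card_filter_add_card_filter_not
                (s := (Finset.univ : Finset {x // x ∈ A})) (p := fun a => a ∈ s₀)
              have hfs : (Finset.univ.filter (fun a => a ∈ s₀)) = s₀ := by
                ext a; simp
              rw [hfs] at this
              rw [Finset.card_univ, hcardA'] at this
              omega
      have hcast : ((s₀.biUnion N).card : ℝ) * (1/n) + ((n - s₀.card : ℕ) : ℝ) * (1/n)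
          ≤ (μ:ℝ)/n := by
        rw [← add_mul, ← Nat.cast_add]
        rw [div_eq_mul_one_div (μ:ℝ) n]
        apply mul_le_mul_of_nonneg_right _ (by positivity)
        exact_mod_cast hkey
      linarith
    -- rewrite the cost
    have hpt : ∀ (a : {x // x ∈ A}) (b : {x // x ∈ B}),
        φ a b * d ↑a ↑b = φ a b - (1/2) * (if G.Adj ↑a ↑b then φ a b else 0) := by
      intro a b
      rw [hd ↑a a.2 ↑b b.2]
      split_ifs <;> ring
    have hcost : ∑ a : {x // x ∈ A}, ∑ b : {x // x ∈ B}, φ a b * d ↑a ↑b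
        = 1 - (1/2) * Sadj := by
      have h1 : ∀ a : {x // x ∈ A}, ∑ b : {x // x ∈ B}, φ a b * d ↑a ↑b =
          1/(n:ℝ) - (1/2) * ∑ b : {x // x ∈ B}, (if G.Adj ↑a ↑b then φ a b else 0) := by
        intro a
        rw [Finset.sum_congr rfl (fun b _ => hpt a b), Finset.sum_sub_distrib,
          ← Finset.mul_sum, hrow a]
      rw [Finset.sum_congr rfl (fun a _ => h1 a), Finset.sum_sub_distrib,
        ← Finset.mul_sum, ← hSadj, Finset.sum_const, Finset.card_univ, hcardA',
        nsmul_eq_mul, mul_one_div, div_self hn0.ne']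
    rw [hcost]
    have heq : (2*(n:ℝ) - μ)/(2*n) = 1 - (1/2) * ((μ:ℝ)/n) := by
      field_simp
    rw [heq]
    linarith
end

section
/- For every ε > 0 there exists N such that for all n ≥ N the following holds. Let each of A and B be a set of n vertices, and for each pair (a, b) ∈ A × B let the edge ab be present independently with probability p(a,b), where p(a,b) ≥ (log n)²/n for every pair. Then with probability at least 1 − ε the resulting random bipartite graph contains a perfect matching (a set of n pairwise disjoint edges covering all of A and B). -/
open MeasureTheory Finset
open scoped ENNReal

lemma hall_fail {n : ℕ} (ω : (Fin n × Fin n) → Bool)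
    (h : ¬ ∃ σ : Equiv.Perm (Fin n), ∀ i, ω (i, σ i) = true) :
    ∃ S T : Finset (Fin n), 1 ≤ S.card ∧ S.card ≤ n ∧ T.card + 1 = S.card ∧
      ∀ a ∈ S, ∀ b, b ∉ T → ω (a, b) = false := by
  classical
  set t : Fin n → Finset (Fin n) := fun a => univ.filter fun b => ω (a, b) = true with ht
  by_cases hall : ∀ s : Finset (Fin n), s.card ≤ (s.biUnion t).card
  · obtain ⟨f, hfinj, hf⟩ := (Finset.all_card_le_biUnion_card_iff_exists_injective t).mp hall
    refine absurd ⟨Equiv.ofBijective f (Finite.injective_iff_bijective.mp hfinj),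
      fun i => ?_⟩ h
    simpa [ht] using hf i
  · push_neg at hall
    obtain ⟨S, hS⟩ := hall
    have hSn : S.card ≤ n := by
      simpa using Finset.card_le_univ S
    obtain ⟨T, hT1, -, hT2⟩ := Finset.exists_subsuperset_card_eq
      (Finset.subset_univ (S.biUnion t)) (show (S.biUnion t).card ≤ S.card - 1 by omega)
      (by simpa using (show S.card - 1 ≤ n by omega))
    refine ⟨S, T, by omega, hSn, by omega, fun a ha b hb => ?_⟩
    have : b ∉ t a := fun hbt => hb (hT1 (Finset.mem_biUnion.mpr ⟨a, ha, hbt⟩))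
    simpa [ht] using this

lemma cyl_bound {n : ℕ} (p : Fin n × Fin n → ℝ) (hp1 : ∀ e, p e ≤ 1) (hp0 : ∀ e, 0 ≤ p e)
    (q : ℝ) (hq : ∀ e, q ≤ p e) (hq1 : q ≤ 1)
    (S T : Finset (Fin n)) :
    Measure.pi (fun e : Fin n × Fin n =>
        (PMF.bernoulli (Real.toNNReal (p e))
          (Real.toNNReal_le_one.mpr (hp1 e))).toMeasure)
      {ω : (Fin n × Fin n) → Bool | ∀ a ∈ S, ∀ b ∉ T, ω (a, b) = false}
      ≤ ENNReal.ofReal ((1 - q) ^ (S.card * (n - T.card))) := by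
  classical
  set ν := fun e : Fin n × Fin n =>
    (PMF.bernoulli (Real.toNNReal (p e)) (Real.toNNReal_le_one.mpr (hp1 e))).toMeasure with hν
  set s : (Fin n × Fin n) → Set Bool :=
    fun e => if e ∈ S ×ˢ Tᶜ then {false} else Set.univ with hs
  have hmem : ∀ e : Fin n × Fin n, e ∈ S ×ˢ Tᶜ ↔ (e.1 ∈ S ∧ e.2 ∉ T) := by
    intro e; simp [Finset.mem_product, Finset.mem_compl]
  have hset : {ω : (Fin n × Fin n) → Bool | ∀ a ∈ S, ∀ b ∉ T, ω (a, b) = false}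
      = Set.pi Set.univ s := by
    ext ω
    simp only [Set.mem_setOf_eq, Set.mem_pi, Set.mem_univ, true_implies, hs]
    constructor
    · intro h e
      by_cases he : e ∈ S ×ˢ Tᶜ
      · rw [if_pos he]
        obtain ⟨h1, h2⟩ := (hmem e).mp he
        simpa using h e.1 h1 e.2 h2
      · rw [if_neg he]; trivial
    · intro h a ha b hb
      have h2 := h (a, b)
      rw [if_pos ((hmem (a, b)).mpr ⟨ha, hb⟩)] at h2
      simpa using h2
  have hone : ∀ e ∈ (S ×ˢ Tᶜ)ᶜ, ν e (s e) = 1 := by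
    intro e he
    rw [hs]
    simp only [if_neg (Finset.mem_compl.mp he)]
    exact measure_univ
  have hfac : ∀ e ∈ S ×ˢ Tᶜ, ν e (s e) = ENNReal.ofReal (1 - p e) := by
    intro e he
    rw [hs]
    simp only [if_pos he]
    rw [hν]
    show (PMF.bernoulli (Real.toNNReal (p e)) _).toMeasure {false} = _
    rw [PMF.toMeasure_apply_singleton _ _ (measurableSet_singleton false),
      PMF.bernoulli_apply]
    simp [ENNReal.ofReal_sub _ (hp0 e)]; rfl
  have hcard : (S ×ˢ Tᶜ).card = S.card * (n - T.card) := by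
    rw [Finset.card_product, Finset.card_compl]
    simp
  rw [hset, Measure.pi_pi]
  calc (∏ e, ν e (s e))
      = (∏ e ∈ S ×ˢ Tᶜ, ν e (s e)) * ∏ e ∈ (S ×ˢ Tᶜ)ᶜ, ν e (s e) :=
        (Finset.prod_mul_prod_compl _ _).symm
    _ = ∏ e ∈ S ×ˢ Tᶜ, ν e (s e) := by
        rw [Finset.prod_congr rfl hone, Finset.prod_const_one, mul_one]
    _ ≤ ∏ _e ∈ S ×ˢ Tᶜ, ENNReal.ofReal (1 - q) := by
        refine Finset.prod_le_prod' fun e he => ?_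
        rw [hfac e he]
        exact ENNReal.ofReal_le_ofReal (by linarith [hq e])
    _ = ENNReal.ofReal (1 - q) ^ (S.card * (n - T.card)) := by
        rw [Finset.prod_const, hcard]
    _ = ENNReal.ofReal ((1 - q) ^ (S.card * (n - T.card))) := by
        rw [ENNReal.ofReal_pow (by linarith)]

lemma choose_le_pow_min (n k : ℕ) (hkn : k ≤ n) : n.choose k ≤ n ^ min k (n - k) := by
  rcases min_cases k (n - k) with ⟨hm, -⟩ | ⟨hm, -⟩
  · rw [hm]; exact Nat.choose_le_pow n k
  · rw [hm, ← Nat.choose_symm hkn]; exact Nat.choose_le_pow n (n - k)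

lemma core_bound (n k : ℕ) (hk1 : 1 ≤ k) (hkn : k ≤ n) (hlog : 8 ≤ Real.log n)
    (hp01 : Real.log n ^ 2 / n ≤ 1) :
    (n.choose k : ℝ) * n.choose (k - 1) * (1 - Real.log n ^ 2 / n) ^ (k * (n - k + 1))
      ≤ 1 / (n : ℝ) ^ 2 := by
  have hn0 : 0 < n := lt_of_lt_of_le hk1 hkn
  have hn0' : (0 : ℝ) < n := by exact_mod_cast hn0
  set L := Real.log n with hL
  have hL0 : (0 : ℝ) < L := lt_of_lt_of_le (by norm_num) hlog
  have hen : Real.exp L = n := Real.exp_log hn0'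
  set m := min k (n - k + 1) with hm
  have hm1 : 1 ≤ m := le_min hk1 (by omega)
  set j := k * (n - k + 1) with hj
  have hmn : m * n ≤ 2 * j := by
    rcases le_total k (n - k + 1) with h | h
    · have hm' : m = k := min_eq_left h
      have h2 : n ≤ 2 * (n - k + 1) := by omega
      calc m * n = k * n := by rw [hm']
        _ ≤ k * (2 * (n - k + 1)) := Nat.mul_le_mul_left k h2
        _ = 2 * j := by ring
    · have hm' : m = n - k + 1 := min_eq_right h
      have h2 : n ≤ 2 * k := by omega
      calc m * n = (n - k + 1) * n := by rw [hm']
        _ ≤ (n - k + 1) * (2 * k) := Nat.mul_le_mul_left _ h2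
        _ = 2 * j := by ring
  have hc1 : (n.choose k : ℝ) ≤ (n : ℝ) ^ m := by
    have h1 : n.choose k ≤ n ^ m := by
      refine le_trans (choose_le_pow_min n k hkn) (Nat.pow_le_pow_right hn0 ?_)
      rcases min_cases k (n - k) with ⟨hmm, h⟩ | ⟨hmm, h⟩ <;> rw [hmm] <;> omega
    exact_mod_cast h1
  have hc2 : (n.choose (k - 1) : ℝ) ≤ (n : ℝ) ^ m := by
    have h1 : n.choose (k - 1) ≤ n ^ m := by
      refine le_trans (choose_le_pow_min n (k - 1) (by omega)) (Nat.pow_le_pow_right hn0 ?_)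
      rcases min_cases (k - 1) (n - (k - 1)) with ⟨hmm, h⟩ | ⟨hmm, h⟩ <;> rw [hmm] <;> omega
    exact_mod_cast h1
  have hA0 : (0 : ℝ) ≤ 1 - L ^ 2 / n := by linarith
  have hpow : (1 - L ^ 2 / n) ^ j ≤ Real.exp (-(L ^ 2 / n) * j) := by
    calc (1 - L ^ 2 / n) ^ j ≤ Real.exp (-(L ^ 2 / n)) ^ j := by
          refine pow_le_pow_left₀ hA0 ?_ j
          linarith [Real.add_one_le_exp (-(L ^ 2 / n))]
      _ = Real.exp (-(L ^ 2 / n) * j) := by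
          rw [← Real.exp_nat_mul]; ring_nf
  have hjm : (m : ℝ) * L ^ 2 / 2 ≤ (j : ℝ) * (L ^ 2 / n) := by
    have key : (m : ℝ) * n ≤ 2 * j := by exact_mod_cast hmn
    rw [div_le_iff₀ (by norm_num : (0:ℝ) < 2), mul_comm ((j:ℝ)) _, div_mul_eq_mul_div,
      div_mul_eq_mul_div, le_div_iff₀ hn0']
    nlinarith [sq_nonneg L]
  have hnm : (n : ℝ) ^ m = Real.exp (m * L) := by
    rw [← hen, ← Real.exp_nat_mul]
  have hmain : (n.choose k : ℝ) * n.choose (k - 1) * (1 - L ^ 2 / n) ^ j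
      ≤ Real.exp ((m : ℝ) * (2 * L - L ^ 2 / 2)) := by
    have hb : (n.choose k : ℝ) * n.choose (k - 1) * (1 - L ^ 2 / n) ^ j
        ≤ (n : ℝ) ^ m * (n : ℝ) ^ m * Real.exp (-(L ^ 2 / n) * j) := by
      have h1 : (0 : ℝ) ≤ (n.choose (k-1) : ℝ) := Nat.cast_nonneg _
      have h2 : (0 : ℝ) ≤ (1 - L ^ 2 / n) ^ j := pow_nonneg hA0 j
      have h3 : (0:ℝ) ≤ (n:ℝ) ^ m := by positivity
      nlinarith [(Nat.cast_nonneg (n.choose k) : (0:ℝ) ≤ _), hpow,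
        mul_le_mul hc1 hc2 h1 h3]
    refine hb.trans ?_
    rw [hnm, ← Real.exp_add, ← Real.exp_add]
    apply Real.exp_le_exp.mpr
    nlinarith [hjm]
  refine hmain.trans ?_
  have hfinal : (m : ℝ) * (2 * L - L ^ 2 / 2) ≤ -(2 * L) := by
    have hv : 2 * L - L ^ 2 / 2 ≤ -(2 * L) := by nlinarith
    have hm1' : (1 : ℝ) ≤ m := by exact_mod_cast hm1
    nlinarith
  calc Real.exp ((m : ℝ) * (2 * L - L ^ 2 / 2)) ≤ Real.exp (-(2 * L)) :=
        Real.exp_le_exp.mpr hfinal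
    _ = 1 / (n : ℝ) ^ 2 := by
        have h2 : Real.exp (2 * L) = (n : ℝ) ^ 2 := by
          rw [show (2:ℝ) * L = ((2:ℕ):ℝ) * L by norm_num, Real.exp_nat_mul, hen]
        rw [Real.exp_neg, h2, one_div]

/-- A bipartite Erdős–Rényi random graph with parts of size `n` and edge
probabilities at least `(log n)²/n` has a perfect matching with high
probability: for every `ε > 0` there is `N` such that for all `n ≥ N` and all
edge probabilities `p : Fin n × Fin n → [0,1]` with `p(e) ≥ (log n)²/n`, the
product Bernoulli measure on `{0,1}^{A×B}` gives probability at least `1 − ε`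
to the event that some system of `n` pairwise disjoint edges covering both
sides (i.e. a permutation `σ` with all edges `(i, σ i)` present) exists. -/
theorem bipartite_ER_perfect_matching_whp :
    ∀ ε : ℝ, 0 < ε → ∃ N : ℕ, ∀ n : ℕ, N ≤ n →
      ∀ p : Fin n × Fin n → ℝ,
        (∀ e, (Real.log n) ^ 2 / (n : ℝ) ≤ p e) →
        ∀ hp1 : ∀ e, p e ≤ 1,
          1 - ENNReal.ofReal ε ≤
            Measure.pi (fun e : Fin n × Fin n =>
                (PMF.bernoulli (Real.toNNReal (p e))
                  (Real.toNNReal_le_one.mpr (hp1 e))).toMeasure)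
              {ω : (Fin n × Fin n) → Bool |
                ∃ σ : Equiv.Perm (Fin n), ∀ i : Fin n, ω (i, σ i) = true} := by
  intro ε hε
  refine ⟨max (⌈Real.exp 8⌉₊ + 1) (⌈1 / ε⌉₊ + 1), fun n hn p hp hp1 => ?_⟩
  classical
  have hn1 : 1 ≤ n := le_trans (le_trans (by omega) (le_max_left (⌈Real.exp 8⌉₊ + 1) _)) hn
  have hn0' : (0:ℝ) < n := by exact_mod_cast hn1
  have hexp8 : Real.exp 8 ≤ n := by
    have h1 : (⌈Real.exp 8⌉₊ : ℝ) ≤ n := by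
      exact_mod_cast le_trans (le_trans (Nat.le_succ _) (le_max_left _ _)) hn
    exact (Nat.le_ceil _).trans h1
  have hlog : 8 ≤ Real.log n := (Real.le_log_iff_exp_le hn0').mpr hexp8
  have hεn : 1 / (n:ℝ) ≤ ε := by
    have h1 : (1/ε : ℝ) ≤ n := by
      have h2 : (⌈1/ε⌉₊ : ℝ) ≤ n := by
        exact_mod_cast le_trans (le_trans (Nat.le_succ _) (le_max_right _ _)) hn
      exact (Nat.le_ceil _).trans h2
    calc 1/(n:ℝ) ≤ 1/(1/ε) := one_div_le_one_div_of_le (by positivity) h1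
      _ = ε := one_div_one_div ε
  set q : ℝ := Real.log n ^ 2 / n with hqdef
  have hq0 : 0 ≤ q := by positivity
  have hq1 : q ≤ 1 := by
    have e0 : Fin n × Fin n := (⟨0, hn1⟩, ⟨0, hn1⟩)
    exact (hp e0).trans (hp1 e0)
  have hp0 : ∀ e, 0 ≤ p e := fun e => hq0.trans (hp e)
  set μ := Measure.pi (fun e : Fin n × Fin n =>
    (PMF.bernoulli (Real.toNNReal (p e))
      (Real.toNNReal_le_one.mpr (hp1 e))).toMeasure) with hμ
  set E := {ω : (Fin n × Fin n) → Bool |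
    ∃ σ : Equiv.Perm (Fin n), ∀ i : Fin n, ω (i, σ i) = true} with hE
  have hEm : MeasurableSet E := by
    have hrw : E = ⋃ σ : Equiv.Perm (Fin n), ⋂ i : Fin n,
        (fun ω : (Fin n × Fin n) → Bool => ω (i, σ i)) ⁻¹' {true} := by
      ext ω
      simp [hE, Set.mem_iUnion, Set.mem_iInter]
    rw [hrw]
    exact MeasurableSet.iUnion fun σ => MeasurableSet.iInter fun i =>
      (measurable_pi_apply (i, σ i)) (measurableSet_singleton true)
  haveI : IsProbabilityMeasure μ := by rw [hμ]; infer_instance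
  have hcompl : μ Eᶜ ≤ ENNReal.ofReal ε := by
    have hsub : Eᶜ ⊆ ⋃ k ∈ Finset.Icc 1 n,
        ⋃ S ∈ Finset.powersetCard k (univ : Finset (Fin n)),
        ⋃ T ∈ Finset.powersetCard (k - 1) (univ : Finset (Fin n)),
        {ω : (Fin n × Fin n) → Bool | ∀ a ∈ S, ∀ b ∉ T, ω (a, b) = false} := by
      intro ω hω
      obtain ⟨S, T, h1, h2, h3, h4⟩ := hall_fail ω hω
      refine Set.mem_biUnion (Finset.mem_Icc.mpr ⟨h1, h2⟩) ?_
      refine Set.mem_biUnion (Finset.mem_powersetCard_univ.mpr rfl) ?_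
      refine Set.mem_biUnion (Finset.mem_powersetCard_univ.mpr (show T.card = S.card - 1 by omega)) ?_
      exact fun a ha b hb => h4 a ha b hb
    have hterm : ∀ k ∈ Finset.Icc 1 n,
        (∑ S ∈ powersetCard k (univ : Finset (Fin n)),
          ∑ T ∈ powersetCard (k - 1) (univ : Finset (Fin n)),
            μ {ω : (Fin n × Fin n) → Bool | ∀ a ∈ S, ∀ b ∉ T, ω (a, b) = false})
          ≤ ENNReal.ofReal (1 / (n:ℝ)^2) := by
      intro k hk
      obtain ⟨hk1, hkn⟩ := Finset.mem_Icc.mp hk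
      have hbound : ∀ S ∈ powersetCard k (univ : Finset (Fin n)),
          ∀ T ∈ powersetCard (k - 1) (univ : Finset (Fin n)),
          μ {ω : (Fin n × Fin n) → Bool | ∀ a ∈ S, ∀ b ∉ T, ω (a, b) = false}
            ≤ ENNReal.ofReal ((1 - q) ^ (k * (n - k + 1))) := by
        intro S hS T hT
        have hScard : S.card = k := Finset.mem_powersetCard_univ.mp hS
        have hTcard : T.card = k - 1 := Finset.mem_powersetCard_univ.mp hT
        have := cyl_bound p hp1 hp0 q hp hq1 S T
        rwa [hScard, hTcard, show n - (k - 1) = n - k + 1 by omega] at this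
      calc (∑ S ∈ powersetCard k (univ : Finset (Fin n)),
            ∑ T ∈ powersetCard (k - 1) (univ : Finset (Fin n)),
              μ {ω : (Fin n × Fin n) → Bool | ∀ a ∈ S, ∀ b ∉ T, ω (a, b) = false})
          ≤ ∑ S ∈ powersetCard k (univ : Finset (Fin n)),
            ∑ _T ∈ powersetCard (k - 1) (univ : Finset (Fin n)),
              ENNReal.ofReal ((1 - q) ^ (k * (n - k + 1))) := by
            refine Finset.sum_le_sum fun S hS => Finset.sum_le_sum fun T hT => ?_
            exact hbound S hS T hT
        _ = (n.choose k : ℝ≥0∞) * ((n.choose (k - 1) : ℝ≥0∞) *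
              ENNReal.ofReal ((1 - q) ^ (k * (n - k + 1)))) := by
            rw [Finset.sum_const, Finset.sum_const, Finset.card_powersetCard,
              Finset.card_powersetCard, nsmul_eq_mul, nsmul_eq_mul]
            simp
        _ ≤ ENNReal.ofReal (1 / (n:ℝ)^2) := by
            rw [show ((n.choose k : ℕ) : ℝ≥0∞) = ENNReal.ofReal (n.choose k) from
                (ENNReal.ofReal_natCast _).symm,
              show ((n.choose (k - 1) : ℕ) : ℝ≥0∞) = ENNReal.ofReal (n.choose (k - 1)) from
                (ENNReal.ofReal_natCast _).symm,
              ← ENNReal.ofReal_mul (Nat.cast_nonneg _),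
              ← ENNReal.ofReal_mul (Nat.cast_nonneg _)]
            refine ENNReal.ofReal_le_ofReal ?_
            have := core_bound n k hk1 hkn hlog hq1
            calc (n.choose k : ℝ) * ((n.choose (k - 1) : ℝ) * (1 - q) ^ (k * (n - k + 1)))
                = (n.choose k : ℝ) * (n.choose (k - 1)) * (1 - q) ^ (k * (n - k + 1)) := by
                  ring
              _ ≤ 1 / (n : ℝ) ^ 2 := this
    calc μ Eᶜ ≤ ∑ k ∈ Finset.Icc 1 n,
          ∑ S ∈ powersetCard k (univ : Finset (Fin n)),
          ∑ T ∈ powersetCard (k - 1) (univ : Finset (Fin n)),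
            μ {ω : (Fin n × Fin n) → Bool | ∀ a ∈ S, ∀ b ∉ T, ω (a, b) = false} := by
          refine (measure_mono hsub).trans ?_
          refine (measure_biUnion_finset_le _ _).trans (Finset.sum_le_sum fun k _ => ?_)
          refine (measure_biUnion_finset_le _ _).trans (Finset.sum_le_sum fun S _ => ?_)
          exact measure_biUnion_finset_le _ _
      _ ≤ ∑ _k ∈ Finset.Icc 1 n, ENNReal.ofReal (1 / (n:ℝ)^2) :=
          Finset.sum_le_sum hterm
      _ = (n : ℝ≥0∞) * ENNReal.ofReal (1 / (n:ℝ)^2) := by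
          rw [Finset.sum_const, Nat.card_Icc, nsmul_eq_mul]
          norm_num
      _ = ENNReal.ofReal ((n : ℝ) * (1 / (n:ℝ)^2)) := by
          rw [ENNReal.ofReal_mul (by positivity), ENNReal.ofReal_natCast]
      _ ≤ ENNReal.ofReal ε := by
          refine ENNReal.ofReal_le_ofReal ?_
          calc (n : ℝ) * (1 / (n:ℝ)^2) = 1 / (n:ℝ) := by
                field_simp
            _ ≤ ε := hεn
  have hEexpr : μ E = 1 - μ Eᶜ := by
    have h := measure_compl hEm.compl (measure_ne_top μ Eᶜ)
    rw [compl_compl, measure_univ] at h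
    exact h
  calc 1 - ENNReal.ofReal ε ≤ 1 - μ Eᶜ := tsub_le_tsub_left hcompl 1
    _ = μ E := hEexpr.symm
end
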